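/- Let a ∈ ℂ and let F̂ ∈ ℂ[[x,u₁,u₂]] satisfy x²·∂F̂/∂x + (1+ax)·u₁·∂F̂/∂u₁ − (1+ax)·u₂·∂F̂/∂u₂ = 0 as a formal power series. Then F̂ does not depend on x, i.e., ∂F̂/∂x = 0; equivalently, every monomial x^j u₁^k u₂^l appearing with nonzero coefficient in F̂ has j = 0. -/

import Mathlib

/-- Formal partial derivative of a multivariate formal power series with
respect to the `i`-th variable. -/
noncomputable def mvPderiv {n : ℕ} (i : Fin n) (F : MvPowerSeries (Fin n) ℂ) :
    MvPowerSeries (Fin n) ℂ :=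
  fun d => ((d i : ℕ) + 1 : ℂ) * MvPowerSeries.coeff (R := ℂ) (d + Finsupp.single i 1) F

open MvPowerSeries

/-!
The Euler operators `x ∂ₓ`, `u₁ ∂_{u₁}`, `u₂ ∂_{u₂}` act diagonally on monomials, and
`X_a F = x (x ∂ₓ F + a G) + G` with `G = u₁ ∂_{u₁} F - u₂ ∂_{u₂} F`. Writing `c_{j,k,l}` for the
coefficient of `x^j u₁^k u₂^l` in `F`, comparing coefficients in `X_a F = 0` gives
`(k - l) c_{0,k,l} = 0` and `(j + a (k - l)) c_{j,k,l} + (k - l) c_{j+1,k,l} = 0`.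
Off the diagonal `k ≠ l` this forces `c_{j,k,l} = 0` by induction on `j`; on the diagonal
`k = l` the second relation reads `j c_{j,k,k} = 0`.
-/

lemma Finsupp.exists_eq_add_single_of_apply_ne_zero {σ : Type*} {d : σ →₀ ℕ} {i : σ}
    (hd : d i ≠ 0) : ∃ e : σ →₀ ℕ, d = e + Finsupp.single i 1 :=
  ⟨d - Finsupp.single i 1,
    (tsub_add_cancel_of_le (Finsupp.single_le_iff.mpr (Nat.one_le_iff_ne_zero.mpr hd))).symm⟩

namespace MvPowerSeries

variable {σ R : Type*} [CommSemiring R]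

lemma coeff_X_mul_of_apply_eq_zero {i : σ} {d : σ →₀ ℕ} (hd : d i = 0) (φ : MvPowerSeries σ R) :
    coeff d (X i * φ) = 0 := by
  rw [X_def, coeff_monomial_mul, if_neg]
  intro h
  simpa [hd] using h i

lemma coeff_add_single_X_mul (i : σ) (d : σ →₀ ℕ) (φ : MvPowerSeries σ R) :
    coeff (d + Finsupp.single i 1) (X i * φ) = coeff d φ := by
  rw [X_def, add_comm, coeff_add_monomial_mul, one_mul]

end MvPowerSeries

lemma coeff_mvPderiv {n : ℕ} (i : Fin n) (F : MvPowerSeries (Fin n) ℂ) (d : Fin n →₀ ℕ) :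
    coeff d (mvPderiv i F) = (d i + 1) * coeff (d + Finsupp.single i 1) F :=
  rfl

lemma coeff_X_mul_mvPderiv {n : ℕ} (i : Fin n) (F : MvPowerSeries (Fin n) ℂ) (d : Fin n →₀ ℕ) :
    coeff d (X i * mvPderiv i F) = d i * coeff d F := by
  by_cases hd : d i = 0
  · rw [coeff_X_mul_of_apply_eq_zero hd, hd, Nat.cast_zero, zero_mul]
  · obtain ⟨e, rfl⟩ := Finsupp.exists_eq_add_single_of_apply_ne_zero hd
    rw [coeff_add_single_X_mul, coeff_mvPderiv]
    simp

lemma coeff_X_one_mul_mvPderiv_sub (F : MvPowerSeries (Fin 3) ℂ) (d : Fin 3 →₀ ℕ) :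
    coeff d (X 1 * mvPderiv 1 F - X 2 * mvPderiv 2 F) = ((d 1 : ℂ) - d 2) * coeff d F := by
  rw [map_sub, coeff_X_mul_mvPderiv, coeff_X_mul_mvPderiv, sub_mul]

def IsFormalFirstIntegral (a : ℂ) (F : MvPowerSeries (Fin 3) ℂ) : Prop :=
  X 0 ^ 2 * mvPderiv 0 F + (1 + C a * X 0) * X 1 * mvPderiv 1 F
    - (1 + C a * X 0) * X 2 * mvPderiv 2 F = 0

namespace IsFormalFirstIntegral

variable {a : ℂ} {F : MvPowerSeries (Fin 3) ℂ} (hF : IsFormalFirstIntegral a F)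
include hF

lemma X_zero_mul_add_eq_zero :
    X 0 * (X 0 * mvPderiv 0 F + C a * (X 1 * mvPderiv 1 F - X 2 * mvPderiv 2 F))
      + (X 1 * mvPderiv 1 F - X 2 * mvPderiv 2 F) = 0 := by
  unfold IsFormalFirstIntegral at hF
  linear_combination hF

lemma coeff_of_apply_zero_eq_zero {d : Fin 3 →₀ ℕ} (hd : d 0 = 0) :
    ((d 1 : ℂ) - d 2) * coeff d F = 0 := by
  simpa [coeff_X_mul_of_apply_eq_zero hd, coeff_X_one_mul_mvPderiv_sub] using
    congrArg (coeff d) hF.X_zero_mul_add_eq_zero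

lemma coeff_add_single_zero (d : Fin 3 →₀ ℕ) :
    (d 0 + a * ((d 1 : ℂ) - d 2)) * coeff d F
      + ((d 1 : ℂ) - d 2) * coeff (d + Finsupp.single 0 1) F = 0 := by
  have h := congrArg (coeff (d + Finsupp.single 0 1)) hF.X_zero_mul_add_eq_zero
  simp only [map_add, coeff_add_single_X_mul, coeff_X_mul_mvPderiv, coeff_C_mul,
    coeff_X_one_mul_mvPderiv_sub, map_zero] at h
  simpa [add_mul, mul_assoc] using h

lemma coeff_eq_zero_of_apply_one_ne_apply_two {d : Fin 3 →₀ ℕ} (hd : d 1 ≠ d 2) :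
    coeff d F = 0 := by
  obtain ⟨n, hn⟩ : ∃ n, d 0 = n := ⟨_, rfl⟩
  induction n generalizing d with
  | zero =>
    exact (mul_eq_zero.mp (hF.coeff_of_apply_zero_eq_zero hn)).resolve_left
      (sub_ne_zero.mpr (Nat.cast_injective.ne hd))
  | succ n ih =>
    obtain ⟨e, rfl⟩ := Finsupp.exists_eq_add_single_of_apply_ne_zero (d := d) (i := 0) (by omega)
    obtain ⟨hen, he⟩ : e 0 = n ∧ e 1 ≠ e 2 := by simpa using And.intro hn hd
    have h := hF.coeff_add_single_zero e
    rw [ih he hen, mul_zero, zero_add] at h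
    exact (mul_eq_zero.mp h).resolve_left (sub_ne_zero.mpr (Nat.cast_injective.ne he))

lemma coeff_eq_zero_of_apply_zero_ne_zero {d : Fin 3 →₀ ℕ} (hd : d 0 ≠ 0) :
    coeff d F = 0 := by
  by_cases hd' : d 1 = d 2
  · have h := hF.coeff_add_single_zero d
    rw [hd', sub_self, mul_zero, add_zero, zero_mul, add_zero] at h
    exact (mul_eq_zero.mp h).resolve_left (Nat.cast_ne_zero.mpr hd)
  · exact hF.coeff_eq_zero_of_apply_one_ne_apply_two hd'

end IsFormalFirstIntegral

/-- a formal first integral `F̂ ∈ ℂ[[x,u₁,u₂]]` of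
`X_a = x² ∂ₓ + (1+ax)(u₁ ∂_{u₁} − u₂ ∂_{u₂})` does not depend on `x`:
`∂F̂/∂x = 0`, and equivalently every monomial `x^j u₁^k u₂^l` appearing with a
nonzero coefficient in `F̂` has `j = 0`. -/
theorem stmt6 (a : ℂ) (F : MvPowerSeries (Fin 3) ℂ)
    (hF : (X 0 : MvPowerSeries (Fin 3) ℂ) ^ 2 * mvPderiv 0 F
        + (1 + C (σ := Fin 3) (R := ℂ) a * X 0) * X 1 * mvPderiv 1 F
        - (1 + C (σ := Fin 3) (R := ℂ) a * X 0) * X 2 * mvPderiv 2 F = 0) :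
    mvPderiv 0 F = 0 ∧
    ∀ j k l : ℕ,
      MvPowerSeries.coeff (R := ℂ)
          (Finsupp.single 0 j + Finsupp.single 1 k + Finsupp.single 2 l) F ≠ 0 →
        j = 0 := by
  have hF : IsFormalFirstIntegral a F := hF
  refine ⟨?_, fun j k l hne => ?_⟩
  · ext d
    rw [coeff_mvPderiv, hF.coeff_eq_zero_of_apply_zero_ne_zero (by simp), mul_zero, map_zero]
  · by_contra hj
    exact hne (hF.coeff_eq_zero_of_apply_zero_ne_zero (by simpa using hj))
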